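/- arXiv:math/0503204 — 2 statements merged into one kernel-verified Lean document; each statement's English description precedes it below -/
import Mathlib

section
/- Every abelian subgroup of the symmetric group Sym(n) has order at most 3^(n/3) (in particular, at most 2^n for n ≥ 1). -/
/-!
Two elements of an abelian group that agree at a point `x` agree on the whole orbit of `x`,
since `g • k • x = k • g • x`. A faithful abelian action is therefore determined by the images of
one chosen point per orbit, so `|G|` is at most the product of the orbit sizes `mᵢ`, where
`∑ mᵢ` is the number of points. Finally `m ≤ 3 ^ (m / 3)` for every natural `m`, because `m ^ 3 ≤ 3 ^ m`.
-/

theorem Nat.pow_three_le_three_pow (m : ℕ) : m ^ 3 ≤ 3 ^ m := by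
  induction m with
  | zero => norm_num
  | succ k ih =>
    rcases Nat.lt_or_ge k 3 with hk | hk
    · interval_cases k <;> norm_num
    · calc (k + 1) ^ 3 ≤ 3 * k ^ 3 := by nlinarith [Nat.mul_le_mul hk hk]
        _ ≤ 3 ^ (k + 1) := by rw [pow_succ 3 k]; omega

theorem Nat.cast_le_three_rpow_div_three (m : ℕ) : (m : ℝ) ≤ 3 ^ ((m : ℝ) / 3) := by
  have hcube : ((3 : ℝ) ^ ((m : ℝ) / 3)) ^ 3 = 3 ^ m := by
    rw [← Real.rpow_natCast, ← Real.rpow_mul (by norm_num)]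
    norm_num
  refine le_of_pow_le_pow_left₀ three_ne_zero (by positivity) ?_
  rw [hcube]
  exact_mod_cast m.pow_three_le_three_pow

theorem Finset.prod_natCast_le_three_rpow_sum_div_three {ι : Type*} (s : Finset ι) (f : ι → ℕ) :
    ∏ i ∈ s, (f i : ℝ) ≤ 3 ^ ((∑ i ∈ s, (f i : ℝ)) / 3) := by
  rw [Finset.sum_div, Real.rpow_sum_of_pos three_pos]
  exact Finset.prod_le_prod (fun i _ ↦ by positivity)
    fun i _ ↦ (f i).cast_le_three_rpow_div_three

theorem Finset.prod_le_two_pow_sum {ι : Type*} (s : Finset ι) (f : ι → ℕ) :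
    ∏ i ∈ s, f i ≤ 2 ^ ∑ i ∈ s, f i := by
  rw [← Finset.prod_pow_eq_pow_sum]
  exact Finset.prod_le_prod' fun i _ ↦ Nat.lt_two_pow_self.le

namespace MulAction

theorem smul_eq_smul_of_mem_orbit {M α : Type*} [Monoid M] [IsMulCommutative M] [MulAction M α]
    {g h : M} {x y : α} (hy : y ∈ orbit M x) (hx : g • x = h • x) : g • y = h • y := by
  obtain ⟨k, rfl⟩ := hy
  rw [smul_smul, smul_smul, mul_comm' g, mul_comm' h, mul_smul, mul_smul, hx]

variable (G α : Type*) [Group G] [MulAction G α]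

theorem injective_smul_orbitRel_out [IsMulCommutative G] [FaithfulSMul G α] :
    Function.Injective fun (g : G) (ω : orbitRel.Quotient G α) ↦
      g • (⟨ω.out, orbitRel.Quotient.mem_orbit.mpr ω.out_eq'⟩ : ω.orbit) := by
  intro g h hgh
  refine FaithfulSMul.eq_of_smul_eq_smul (α := α) fun x ↦ ?_
  set ω : orbitRel.Quotient G α := Quotient.mk'' x
  have hx : x ∈ orbit G ω.out := by
    rw [← orbitRel.Quotient.orbit_eq_orbit_out ω Quotient.out_eq']
    exact orbitRel.Quotient.mem_orbit.mpr rfl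
  exact smul_eq_smul_of_mem_orbit hx (congrArg Subtype.val (congrFun hgh ω))

theorem card_le_prod_card_orbit [IsMulCommutative G] [FaithfulSMul G α] [Finite α]
    [Fintype (orbitRel.Quotient G α)] :
    Nat.card G ≤ ∏ ω : orbitRel.Quotient G α, Nat.card ω.orbit := by
  rw [← Nat.card_pi]
  exact Nat.card_le_card_of_injective _ (injective_smul_orbitRel_out G α)

theorem card_eq_sum_card_orbit [Fintype (orbitRel.Quotient G α)] [Finite α] :
    Nat.card α = ∑ ω : orbitRel.Quotient G α, Nat.card ω.orbit := by
  rw [Nat.card_congr (selfEquivSigmaOrbits' G α), Nat.card_sigma]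

variable [IsMulCommutative G] [FaithfulSMul G α] [Finite α]

theorem card_le_three_rpow_card_div_three :
    (Nat.card G : ℝ) ≤ 3 ^ ((Nat.card α : ℝ) / 3) := by
  have := Fintype.ofFinite (orbitRel.Quotient G α)
  calc (Nat.card G : ℝ) ≤ ∏ ω : orbitRel.Quotient G α, (Nat.card ω.orbit : ℝ) := by
        exact_mod_cast card_le_prod_card_orbit G α
    _ ≤ 3 ^ ((∑ ω : orbitRel.Quotient G α, (Nat.card ω.orbit : ℝ)) / 3) :=
        Finset.prod_natCast_le_three_rpow_sum_div_three _ _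
    _ = 3 ^ ((Nat.card α : ℝ) / 3) := by rw [card_eq_sum_card_orbit G α, Nat.cast_sum]

theorem card_le_two_pow_card : Nat.card G ≤ 2 ^ Nat.card α := by
  have := Fintype.ofFinite (orbitRel.Quotient G α)
  rw [card_eq_sum_card_orbit G α]
  exact (card_le_prod_card_orbit G α).trans (Finset.prod_le_two_pow_sum _ _)

end MulAction

/-- Every abelian subgroup of `Sym(n)` has order at most `3^(n/3)`;
in particular, at most `2^n` for `n ≥ 1`. -/
theorem abelian_subgroup_symmetric_card_le (n : ℕ)
    (H : Subgroup (Equiv.Perm (Fin n)))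
    (hH : ∀ a b : Equiv.Perm (Fin n), a ∈ H → b ∈ H → a * b = b * a) :
    (Nat.card H : ℝ) ≤ (3 : ℝ) ^ ((n : ℝ) / 3) ∧
      (1 ≤ n → Nat.card H ≤ 2 ^ n) := by
  have : IsMulCommutative H := .of_comm fun a b ↦ Subtype.ext (hH a b a.2 b.2)
  refine ⟨?_, fun _ ↦ ?_⟩
  · simpa using MulAction.card_le_three_rpow_card_div_three H (Fin n)
  · simpa using MulAction.card_le_two_pow_card H (Fin n)
end

section
/- Let G be a finite group generated by a finite set S, and suppose the Kazhdan constant K(G;S) ≥ ε > 0, meaning: for every unitary representation ρ of G on a finite-dimensional complex inner product space with no nonzero G-invariant vector, and every unit vector v, there exists s ∈ S with ‖ρ(s)v − v‖ > ε. Then the Cayley graph of G with respect to S is an (ε²/4)-expander: every subset A with |A| ≤ |G|/2 satisfies |∂A| ≥ (ε²/4)|A|, where ∂A is the set of vertices outside A adjacent to A. -/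
/-!
The right regular representation of `G` on the sum-zero functions `G → ℂ` has no nonzero
invariant vector, so the Kazhdan hypothesis applies to it. For the centred indicator
`f = 𝟙_A - |A|/|G|` one has `‖f‖² = |A|(1 - |A|/|G|) ≥ |A|/2`, while `R_s f - f = 𝟙_{A s⁻¹} - 𝟙_A`
has squared norm `|A s⁻¹ Δ A| = 2 |A s⁻¹ \ A| ≤ 2 |∂A|`. Hence `ε² |A| / 2 < 2 |∂A|`.
-/

open Finset

namespace UnitaryRep

variable {G : Type*} [Group G]
variable {V E : Type*} [NormedAddCommGroup V] [InnerProductSpace ℂ V]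
  [NormedAddCommGroup E] [InnerProductSpace ℂ E]

def transport (e : V ≃ₗᵢ[ℂ] E) (ρ : G →* (V ≃ₗᵢ[ℂ] V)) : G →* (E ≃ₗᵢ[ℂ] E) where
  toFun g := (e.symm.trans (ρ g)).trans e
  map_one' := by ext; simp
  map_mul' g h := by ext; simp

@[simp]
lemma transport_apply (e : V ≃ₗᵢ[ℂ] E) (ρ : G →* (V ≃ₗᵢ[ℂ] V)) (g : G) (x : E) :
    transport e ρ g x = e (ρ g (e.symm x)) := rfl

def restrict (ρ : G →* (V ≃ₗᵢ[ℂ] V)) (W : Submodule ℂ V) (hW : ∀ g, ∀ w ∈ W, ρ g w ∈ W) :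
    G →* (W ≃ₗᵢ[ℂ] W) where
  toFun g :=
    { toFun w := ⟨ρ g w, hW g w w.2⟩
      invFun w := ⟨ρ g⁻¹ w, hW g⁻¹ w w.2⟩
      map_add' v w := by ext; simp
      map_smul' c w := by ext; simp
      left_inv w := by ext; simp [map_inv, LinearIsometryEquiv.coe_inv]
      right_inv w := by ext; simp [map_inv, LinearIsometryEquiv.coe_inv]
      norm_map' w := (ρ g).norm_map w }
  map_one' := by ext; simp
  map_mul' g h := by ext; simp

end UnitaryRep

def IsKazhdanLowerBound {G : Type*} [Group G] (S : Finset G) (ε : ℝ) : Prop :=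
  ∀ (d : ℕ) (ρ : G →* (EuclideanSpace ℂ (Fin d) ≃ₗᵢ[ℂ] EuclideanSpace ℂ (Fin d))),
    (¬ ∃ w : EuclideanSpace ℂ (Fin d), w ≠ 0 ∧ ∀ g : G, ρ g w = w) →
    ∀ v : EuclideanSpace ℂ (Fin d), ‖v‖ = 1 → ∃ s ∈ S, ε < ‖ρ s v - v‖

namespace IsKazhdanLowerBound

open UnitaryRep

variable {G : Type*} [Group G] {S : Finset G} {ε : ℝ}
variable {V : Type*} [NormedAddCommGroup V] [InnerProductSpace ℂ V] [FiniteDimensional ℂ V]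

lemma exists_lt_norm_sub (hkaz : IsKazhdanLowerBound S ε) (ρ : G →* (V ≃ₗᵢ[ℂ] V))
    (hfix : ∀ w, (∀ g, ρ g w = w) → w = 0) {v : V} (hv : v ≠ 0) :
    ∃ s ∈ S, ε * ‖v‖ < ‖ρ s v - v‖ := by
  set e := (stdOrthonormalBasis ℂ V).repr
  have hfix' : ¬ ∃ w, w ≠ 0 ∧ ∀ g : G, transport e ρ g w = w := by
    rintro ⟨w, hw0, hw⟩
    refine hw0 (e.symm.map_eq_zero_iff.mp (hfix _ fun g => e.injective ?_))
    simpa using hw g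
  have hv' : 0 < ‖v‖ := norm_pos_iff.mpr hv
  obtain ⟨s, hs, hlt⟩ := hkaz _ (transport e ρ) hfix' (e ((‖v‖⁻¹ : ℂ) • v)) (by
    simp [norm_smul, hv'.ne'])
  refine ⟨s, hs, ?_⟩
  have : ‖transport e ρ s (e ((‖v‖⁻¹ : ℂ) • v)) - e ((‖v‖⁻¹ : ℂ) • v)‖ =
      ‖v‖⁻¹ * ‖ρ s v - v‖ := by
    simp [← map_sub, ← smul_sub, norm_smul]
  rw [this, ← div_eq_inv_mul, lt_div_iff₀ hv'] at hlt
  linarith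

lemma exists_lt_norm_sub_of_mem (hkaz : IsKazhdanLowerBound S ε) (ρ : G →* (V ≃ₗᵢ[ℂ] V))
    (W : Submodule ℂ V) (hW : ∀ g, ∀ w ∈ W, ρ g w ∈ W)
    (hfix : ∀ w ∈ W, (∀ g, ρ g w = w) → w = 0) {v : V} (hvW : v ∈ W) (hv : v ≠ 0) :
    ∃ s ∈ S, ε * ‖v‖ < ‖ρ s v - v‖ := by
  have hfixW : ∀ w : W, (∀ g, restrict ρ W hW g w = w) → w = 0 := fun w hw =>
    Subtype.ext (hfix w w.2 fun g => congrArg Subtype.val (hw g))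
  exact hkaz.exists_lt_norm_sub (restrict ρ W hW) hfixW (v := ⟨v, hvW⟩) (by simpa using hv)

end IsKazhdanLowerBound

section RegularRepresentation

variable {G : Type*} [Group G] [Fintype G]

noncomputable def rightRegular : G →* (EuclideanSpace ℂ G ≃ₗᵢ[ℂ] EuclideanSpace ℂ G) where
  toFun g := LinearIsometryEquiv.piLpCongrLeft 2 ℂ ℂ (Equiv.mulRight g).symm
  map_one' := by ext; simp
  map_mul' g h := by ext; simp [mul_assoc]

@[simp]
lemma rightRegular_apply (g : G) (f : EuclideanSpace ℂ G) (x : G) :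
    rightRegular g f x = f (x * g) := rfl

noncomputable def sumZero (ι : Type*) [Fintype ι] : Submodule ℂ (EuclideanSpace ℂ ι) :=
  LinearMap.ker (∑ x, PiLp.projₗ (𝕜 := ℂ) 2 (fun _ : ι => ℂ) x)

lemma mem_sumZero {ι : Type*} [Fintype ι] {f : EuclideanSpace ℂ ι} :
    f ∈ sumZero ι ↔ ∑ x, f x = 0 := by
  simp [sumZero]

lemma rightRegular_mem_sumZero (g : G) {f : EuclideanSpace ℂ G} (hf : f ∈ sumZero G) :
    rightRegular g f ∈ sumZero G := by
  rw [mem_sumZero] at hf ⊢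
  simpa [hf] using Equiv.sum_comp (Equiv.mulRight g) (fun x => f x)

lemma eq_zero_of_mem_sumZero_of_rightRegular_eq {f : EuclideanSpace ℂ G} (hf : f ∈ sumZero G)
    (hfix : ∀ g, rightRegular g f = f) : f = 0 := by
  have hconst : ∀ x, f x = f 1 := fun x => by
    simpa using congrArg (· 1) (hfix x)
  have h1 : f 1 = 0 := by
    simpa [mem_sumZero, hconst, Fintype.card_ne_zero] using hf
  ext x
  simp [hconst x, h1]

end RegularRepresentation

section IndicatorVectors

variable {ι : Type*} [Fintype ι] [DecidableEq ι]

def indicatorVec (A : Finset ι) : EuclideanSpace ℂ ι :=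
  WithLp.toLp 2 fun x => if x ∈ A then 1 else 0

noncomputable def centeredIndicator (A : Finset ι) : EuclideanSpace ℂ ι :=
  WithLp.toLp 2 fun x => (if x ∈ A then 1 else 0) - ((#A / Fintype.card ι : ℝ) : ℂ)

lemma norm_sq_indicatorVec_sub (X A : Finset ι) :
    ‖indicatorVec X - indicatorVec A‖ ^ 2 = #(X \ A) + #(A \ X) := by
  have hterm : ∀ x, ‖indicatorVec X x - indicatorVec A x‖ ^ 2 =
      (if x ∈ X \ A then 1 else 0) + (if x ∈ A \ X then 1 else 0) := fun x => by
    by_cases hX : x ∈ X <;> by_cases hA : x ∈ A <;> simp [indicatorVec, hX, hA]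
  simp only [EuclideanSpace.norm_sq_eq, PiLp.sub_apply, hterm, sum_add_distrib, sum_boole,
    filter_univ_mem]

variable [Nonempty ι]

lemma norm_sq_centeredIndicator (A : Finset ι) :
    ‖centeredIndicator A‖ ^ 2 = #A * (1 - #A / Fintype.card ι) := by
  set α : ℝ := #A / Fintype.card ι
  have hterm : ∀ x, ‖centeredIndicator A x‖ ^ 2 = if x ∈ A then (1 - α) ^ 2 else α ^ 2 :=
    fun x => by
      have hx : centeredIndicator A x = (((if x ∈ A then 1 else 0) - α : ℝ) : ℂ) := by
        simp [centeredIndicator, α, apply_ite (Complex.ofReal)]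
      rw [hx, Complex.norm_real, Real.norm_eq_abs, sq_abs]
      split_ifs <;> ring
  have hcard : (Fintype.card ι : ℝ) ≠ 0 := by positivity
  simp only [EuclideanSpace.norm_sq_eq, hterm, sum_ite, filter_univ_mem, sum_const,
    filter_not, card_univ_sdiff, nsmul_eq_mul, Nat.cast_sub (card_le_univ A)]
  simp only [α]
  field_simp
  ring

lemma centeredIndicator_mem_sumZero (A : Finset ι) : centeredIndicator A ∈ sumZero ι := by
  have hcard : (Fintype.card ι : ℂ) ≠ 0 := by simp
  simp [mem_sumZero, centeredIndicator, sum_sub_distrib, mul_div_cancel₀ _ hcard]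

end IndicatorVectors

section CayleyBoundary

variable {G : Type*} [Group G] [Fintype G] [DecidableEq G]

def cayleyBoundary (S A : Finset G) : Finset G :=
  univ.filter fun g => g ∉ A ∧ ∃ s ∈ S, g * s ∈ A ∨ g * s⁻¹ ∈ A

lemma map_mulRight_inv_sdiff_subset_cayleyBoundary {S : Finset G} {s : G} (hs : s ∈ S)
    (A : Finset G) : A.map (Equiv.mulRight s⁻¹).toEmbedding \ A ⊆ cayleyBoundary S A := by
  intro x hx
  simp only [mem_sdiff, mem_map_equiv] at hx
  simp only [cayleyBoundary, mem_filter, mem_univ, true_and]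
  exact ⟨hx.2, s, hs, Or.inl (by simpa using hx.1)⟩

lemma rightRegular_centeredIndicator_sub (s : G) (A : Finset G) :
    rightRegular s (centeredIndicator A) - centeredIndicator A =
      indicatorVec (A.map (Equiv.mulRight s⁻¹).toEmbedding) - indicatorVec A := by
  ext x
  simp [centeredIndicator, indicatorVec]

lemma norm_sq_rightRegular_centeredIndicator_sub_le {S : Finset G} {s : G} (hs : s ∈ S)
    (A : Finset G) :
    ‖rightRegular s (centeredIndicator A) - centeredIndicator A‖ ^ 2 ≤
      2 * #(cayleyBoundary S A) := by
  rw [rightRegular_centeredIndicator_sub, norm_sq_indicatorVec_sub]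
  set X := A.map (Equiv.mulRight s⁻¹).toEmbedding
  have hcomm : #(A \ X) = #(X \ A) := card_sdiff_comm (by simp [X])
  have hsub : #(X \ A) ≤ #(cayleyBoundary S A) :=
    card_le_card (map_mulRight_inv_sdiff_subset_cayleyBoundary hs A)
  rw [hcomm]
  norm_cast
  omega

end CayleyBoundary

theorem expander_of_kazhdan_general {G : Type*} [Group G] [Fintype G] [DecidableEq G]
    (S : Finset G)
    (ε : ℝ) (hε : 0 < ε)
    (hkaz : ∀ (d : ℕ)
      (ρ : G →* (EuclideanSpace ℂ (Fin d) ≃ₗᵢ[ℂ] EuclideanSpace ℂ (Fin d))),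
      (¬ ∃ w : EuclideanSpace ℂ (Fin d), w ≠ 0 ∧ ∀ g : G, ρ g w = w) →
      ∀ v : EuclideanSpace ℂ (Fin d), ‖v‖ = 1 → ∃ s ∈ S, ε < ‖ρ s v - v‖) :
    ∀ A : Finset G, (A.card : ℝ) ≤ (Fintype.card G : ℝ) / 2 →
      ε ^ 2 / 4 * A.card ≤
        ((Finset.univ.filter (fun g : G =>
          g ∉ A ∧ ∃ s ∈ S, g * s ∈ A ∨ g * s⁻¹ ∈ A)).card : ℝ) := by
  intro A hA
  rcases A.eq_empty_or_nonempty with rfl | hA₀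
  · simp
  have hnorm := norm_sq_centeredIndicator A
  have hhalf : (1 : ℝ) / 2 ≤ 1 - #A / Fintype.card G := by
    rw [le_sub_comm, div_le_iff₀ (by positivity)]
    linarith
  have hv : centeredIndicator A ≠ 0 := by
    intro h₀
    have : (0 : ℝ) < #A := by exact_mod_cast hA₀.card_pos
    rw [h₀, norm_zero] at hnorm
    nlinarith
  obtain ⟨s, hs, hlt⟩ := IsKazhdanLowerBound.exists_lt_norm_sub_of_mem hkaz rightRegular
    (sumZero G) (fun g _ => rightRegular_mem_sumZero g)
    (fun _ => eq_zero_of_mem_sumZero_of_rightRegular_eq) (centeredIndicator_mem_sumZero A) hv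
  have hsq := pow_lt_pow_left₀ hlt (by positivity) two_ne_zero
  rw [mul_pow, hnorm] at hsq
  have hbdry := norm_sq_rightRegular_centeredIndicator_sub_le hs A
  change _ ≤ (#(cayleyBoundary S A) : ℝ)
  nlinarith

/-- If the Kazhdan constant of a finite group `G` with respect to a generating
set `S` is at least `ε`, then the Cayley graph `C(G,S)` is an `ε²/4`-expander. -/
theorem expander_of_kazhdan {G : Type*} [Group G] [Fintype G] [DecidableEq G]
    (S : Finset G) (hgen : Subgroup.closure (S : Set G) = ⊤)
    (ε : ℝ) (hε : 0 < ε)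
    (hkaz : ∀ (d : ℕ)
      (ρ : G →* (EuclideanSpace ℂ (Fin d) ≃ₗᵢ[ℂ] EuclideanSpace ℂ (Fin d))),
      (¬ ∃ w : EuclideanSpace ℂ (Fin d), w ≠ 0 ∧ ∀ g : G, ρ g w = w) →
      ∀ v : EuclideanSpace ℂ (Fin d), ‖v‖ = 1 → ∃ s ∈ S, ε < ‖ρ s v - v‖) :
    ∀ A : Finset G, (A.card : ℝ) ≤ (Fintype.card G : ℝ) / 2 →
      ε ^ 2 / 4 * A.card ≤
        ((Finset.univ.filter (fun g : G =>
          g ∉ A ∧ ∃ s ∈ S, g * s ∈ A ∨ g * s⁻¹ ∈ A)).card : ℝ) :=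
  expander_of_kazhdan_general S ε hε hkaz
end
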